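/- Let n > 2, let 1 < p < ∞, and let s ∈ Δₙ be a point of the (closed) probability simplex. Then ‖Diag(s) − s sᵀ‖_p = 1/2 if and only if s is a permutation of the vector (1/2, 1/2, 0, …, 0), i.e., there exist distinct indices i, j with s_i = s_j = 1/2 and all other coordinates zero. -/

import Mathlib

open scoped ENNReal BigOperators

/-- The softmax function with inverse temperature `lam`. -/
noncomputable def softmax {n : ℕ} (lam : ℝ) (x : Fin n → ℝ) : Fin n → ℝ :=
  fun i => Real.exp (lam * x i) / ∑ j, Real.exp (lam * x j)

/-- The ℓ_p norm on `Fin n → ℝ`, for `p ∈ [1, ∞]`. -/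
noncomputable def lpNorm {n : ℕ} (p : ℝ≥0∞) (x : Fin n → ℝ) : ℝ :=
  if p = ⊤ then ⨆ i, |x i| else (∑ i, |x i| ^ p.toReal) ^ (1 / p.toReal)

/-- The ℓ_p-induced operator norm of a matrix. -/
noncomputable def opNorm {n m : ℕ} (p : ℝ≥0∞) (A : Matrix (Fin n) (Fin m) ℝ) : ℝ :=
  ⨆ v : {v : Fin m → ℝ // v ≠ 0}, lpNorm p (A.mulVec v.val) / lpNorm p v.val

/-- The matrix `Diag(s) - s sᵀ` (Jacobian of softmax with `lam = 1` at a point with value `s`). -/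
noncomputable def softmaxJac {n : ℕ} (s : Fin n → ℝ) : Matrix (Fin n) (Fin n) ℝ :=
  Matrix.diagonal s - Matrix.vecMulVec s s

/-- The open (interior of the) probability simplex. -/
def openSimplex (n : ℕ) : Set (Fin n → ℝ) :=
  {u | (∀ i, 0 < u i) ∧ ∑ i, u i = 1}

/-- The (closed) probability simplex. -/
def probSimplex (n : ℕ) : Set (Fin n → ℝ) :=
  {u | (∀ i, 0 ≤ u i) ∧ ∑ i, u i = 1}

/-!
Schur test: if `rᵢ = ∑ₖ |Aᵢₖ|`, Hölder's inequality gives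
`|(A v)ᵢ| ^ p ≤ rᵢ ^ (p - 1) ∑ⱼ |Aᵢⱼ| |vⱼ| ^ p`, hence `‖A v‖_p ^ p ≤ ∑ⱼ Wⱼ |vⱼ| ^ p` with
`Wⱼ = ∑ᵢ rᵢ ^ (p - 1) |Aᵢⱼ|`, and `‖A‖_p ≤ (maxⱼ Wⱼ) ^ (1 / p)`.

For `A = Diag(s) - s sᵀ` the matrix is symmetric with `rᵢ = 2 sᵢ (1 - sᵢ) ≤ 1 / 2`, so
`Wⱼ ≤ (1 / 2) ^ (p - 1) rⱼ ≤ (1 / 2) ^ p` and `‖A‖_p ≤ 1 / 2`; when `sᵢ = sⱼ = 1 / 2`,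
`eᵢ - eⱼ` is an eigenvector for `1 / 2`. Conversely, `‖A‖_p = 1 / 2` forces some
`Wⱼ = (1 / 2) ^ p`, so `rⱼ = 1 / 2`, i.e. `sⱼ = 1 / 2`, and, as `p > 1`, `rᵢ = 1 / 2` for every
`i` with `Aᵢⱼ = -sᵢ sⱼ ≠ 0`; such an `i ≠ j` exists because the other coordinates sum to `1 / 2`.
-/

open Finset
open scoped Matrix

lemma rpow_sub_one_mul_self {x : ℝ} (hx : x ≠ 0) (y : ℝ) : x ^ (y - 1) * x = x ^ y := by
  rw [Real.rpow_sub_one hx, div_mul_cancel₀ _ hx]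

lemma rpow_inner_le_weight_mul_Lp_of_nonneg {α : Type*} (s : Finset α) {p : ℝ} (hp : 1 ≤ p)
    (w f : α → ℝ) (hw : ∀ i, 0 ≤ w i) (hf : ∀ i, 0 ≤ f i) :
    (∑ i ∈ s, w i * f i) ^ p ≤ (∑ i ∈ s, w i) ^ (p - 1) * ∑ i ∈ s, w i * f i ^ p := by
  have hw' : 0 ≤ ∑ i ∈ s, w i := sum_nonneg fun i _ => hw i
  have hwf : 0 ≤ ∑ i ∈ s, w i * f i ^ p :=
    sum_nonneg fun i _ => mul_nonneg (hw i) (Real.rpow_nonneg (hf i) p)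
  calc (∑ i ∈ s, w i * f i) ^ p
      ≤ ((∑ i ∈ s, w i) ^ (1 - p⁻¹) * (∑ i ∈ s, w i * f i ^ p) ^ p⁻¹) ^ p :=
        Real.rpow_le_rpow (sum_nonneg fun i _ => mul_nonneg (hw i) (hf i))
          (Real.inner_le_weight_mul_Lp_of_nonneg s hp w f hw hf) (by linarith)
    _ = (∑ i ∈ s, w i) ^ (p - 1) * ∑ i ∈ s, w i * f i ^ p := by
        have hp0 : p ≠ 0 := by positivity
        rw [Real.mul_rpow (by positivity) (by positivity), ← Real.rpow_mul hw',
          Real.rpow_inv_rpow hwf hp0, sub_mul, inv_mul_cancel₀ hp0, one_mul]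

section SchurTest

variable {ι κ : Type*} [Fintype κ] (A : Matrix ι κ ℝ)

lemma abs_mulVec_le (v : κ → ℝ) (i : ι) : |(A *ᵥ v) i| ≤ ∑ k, |A i k| * |v k| := by
  simpa only [Matrix.mulVec, dotProduct, abs_mul] using
    abs_sum_le_sum_abs (fun k => A i k * v k) univ

lemma abs_mulVec_rpow_le {q : ℝ} (hq : 1 ≤ q) (v : κ → ℝ) (i : ι) :
    |(A *ᵥ v) i| ^ q ≤ (∑ k, |A i k|) ^ (q - 1) * ∑ k, |A i k| * |v k| ^ q :=
  (Real.rpow_le_rpow (abs_nonneg _) (abs_mulVec_le A v i) (by linarith)).trans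
    (rpow_inner_le_weight_mul_Lp_of_nonneg _ hq _ _ (fun _ => abs_nonneg _)
      fun _ => abs_nonneg _)

variable [Fintype ι]

noncomputable def schurWeight (q : ℝ) (j : κ) : ℝ :=
  ∑ i, (∑ k, |A i k|) ^ (q - 1) * |A i j|

lemma schurWeight_nonneg (q : ℝ) (j : κ) : 0 ≤ schurWeight A q j :=
  sum_nonneg fun _ _ =>
    mul_nonneg (Real.rpow_nonneg (sum_nonneg fun _ _ => abs_nonneg _) _) (abs_nonneg _)

lemma sum_abs_mulVec_rpow_le {q : ℝ} (hq : 1 ≤ q) (v : κ → ℝ) :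
    ∑ i, |(A *ᵥ v) i| ^ q ≤ ∑ j, schurWeight A q j * |v j| ^ q :=
  calc ∑ i, |(A *ᵥ v) i| ^ q
      ≤ ∑ i, (∑ k, |A i k|) ^ (q - 1) * ∑ k, |A i k| * |v k| ^ q :=
        sum_le_sum fun i _ => abs_mulVec_rpow_le A hq v i
    _ = ∑ j, schurWeight A q j * |v j| ^ q := by
        simp only [schurWeight, mul_sum, sum_mul, mul_assoc]
        exact sum_comm

variable {A} {R : ℝ}

lemma schurWeight_le (hR : ∀ i, ∑ k, |A i k| ≤ R) {q : ℝ} (hq : 1 ≤ q) (j : κ) :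
    schurWeight A q j ≤ R ^ (q - 1) * ∑ i, |A i j| := by
  rw [mul_sum]
  exact sum_le_sum fun i _ => mul_le_mul_of_nonneg_right
    (Real.rpow_le_rpow (sum_nonneg fun _ _ => abs_nonneg _) (hR i) (by linarith)) (abs_nonneg _)

lemma schurWeight_lt (hR : ∀ i, ∑ k, |A i k| ≤ R) {q : ℝ} (hq : 1 < q) {i : ι} {j : κ}
    (hA : A i j ≠ 0) (hi : ∑ k, |A i k| < R) : schurWeight A q j < R ^ (q - 1) * ∑ i, |A i j| := by
  rw [mul_sum]
  refine sum_lt_sum (fun i' _ => mul_le_mul_of_nonneg_right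
    (Real.rpow_le_rpow (sum_nonneg fun _ _ => abs_nonneg _) (hR i') (by linarith))
    (abs_nonneg _)) ⟨i, mem_univ i, mul_lt_mul_of_pos_right ?_ (abs_pos.2 hA)⟩
  exact Real.rpow_lt_rpow (sum_nonneg fun _ _ => abs_nonneg _) hi (by linarith)

end SchurTest

section OperatorNorm

variable {m n : ℕ} {p : ℝ≥0∞}

lemma one_le_toReal_of_fact [Fact (1 ≤ p)] (hp : p ≠ ⊤) : 1 ≤ p.toReal := by
  simpa using ENNReal.toReal_mono hp (Fact.out : 1 ≤ p)

lemma lpNorm_eq_norm [Fact (1 ≤ p)] (hp : p ≠ ⊤) (x : Fin n → ℝ) :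
    lpNorm p x = ‖WithLp.toLp p x‖ := by
  rw [lpNorm, if_neg hp, PiLp.norm_eq_sum (by linarith [one_le_toReal_of_fact hp])]
  simp only [Real.norm_eq_abs]

lemma lpNorm_nonneg [Fact (1 ≤ p)] (hp : p ≠ ⊤) (x : Fin n → ℝ) : 0 ≤ lpNorm p x :=
  lpNorm_eq_norm hp x ▸ norm_nonneg _

lemma lpNorm_pos [Fact (1 ≤ p)] (hp : p ≠ ⊤) {x : Fin n → ℝ} (hx : x ≠ 0) : 0 < lpNorm p x := by
  rw [lpNorm_eq_norm hp]
  exact norm_pos_iff.2 (by simpa using hx)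

lemma lpNorm_smul [Fact (1 ≤ p)] (hp : p ≠ ⊤) (c : ℝ) (x : Fin n → ℝ) :
    lpNorm p (c • x) = |c| * lpNorm p x := by
  rw [lpNorm_eq_norm hp, lpNorm_eq_norm hp, WithLp.toLp_smul, norm_smul, Real.norm_eq_abs]

lemma lpNorm_mulVec_le [Fact (1 ≤ p)] (hp : p ≠ ⊤) {A : Matrix (Fin m) (Fin n) ℝ} {c : ℝ}
    (hc : 0 ≤ c) (hA : ∀ j, schurWeight A p.toReal j ≤ c ^ p.toReal) (v : Fin n → ℝ) :
    lpNorm p (A *ᵥ v) ≤ c * lpNorm p v := by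
  set q := p.toReal
  have hq : 1 ≤ q := one_le_toReal_of_fact hp
  have hsum : ∑ i, |(A *ᵥ v) i| ^ q ≤ c ^ q * ∑ j, |v j| ^ q := by
    refine (sum_abs_mulVec_rpow_le A hq v).trans ?_
    rw [mul_sum]
    exact sum_le_sum fun j _ => mul_le_mul_of_nonneg_right (hA j) (by positivity)
  rw [lpNorm, lpNorm, if_neg hp, if_neg hp]
  calc (∑ i, |(A *ᵥ v) i| ^ q) ^ (1 / q)
      ≤ (c ^ q * ∑ j, |v j| ^ q) ^ (1 / q) :=
        Real.rpow_le_rpow (by positivity) hsum (by positivity)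
    _ = c * (∑ j, |v j| ^ q) ^ (1 / q) := by
        rw [Real.mul_rpow (by positivity) (by positivity), one_div,
          Real.rpow_rpow_inv hc (by positivity)]

lemma lpNorm_mulVec_div_le [Fact (1 ≤ p)] (hp : p ≠ ⊤) {A : Matrix (Fin m) (Fin n) ℝ} {c : ℝ}
    (hc : 0 ≤ c) (hA : ∀ j, schurWeight A p.toReal j ≤ c ^ p.toReal) (v : Fin n → ℝ) :
    lpNorm p (A *ᵥ v) / lpNorm p v ≤ c :=
  div_le_of_le_mul₀ (lpNorm_nonneg hp v) hc (lpNorm_mulVec_le hp hc hA v)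

lemma opNorm_le_of_schurWeight_le [Fact (1 ≤ p)] (hp : p ≠ ⊤) {A : Matrix (Fin m) (Fin n) ℝ}
    {c : ℝ} (hc : 0 ≤ c) (hA : ∀ j, schurWeight A p.toReal j ≤ c ^ p.toReal) :
    opNorm p A ≤ c :=
  Real.iSup_le (fun v => lpNorm_mulVec_div_le hp hc hA v.1) hc

lemma opNorm_eq_of_mulVec_eq_smul [Fact (1 ≤ p)] (hp : p ≠ ⊤) {A : Matrix (Fin n) (Fin n) ℝ}
    {c : ℝ} (hc : 0 ≤ c) (hA : ∀ j, schurWeight A p.toReal j ≤ c ^ p.toReal)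
    {v : Fin n → ℝ} (hv : v ≠ 0) (hAv : A *ᵥ v = c • v) : opNorm p A = c := by
  refine (opNorm_le_of_schurWeight_le hp hc hA).antisymm ?_
  have hbdd : BddAbove (Set.range fun v : {v : Fin n → ℝ // v ≠ 0} =>
      lpNorm p (A *ᵥ v.1) / lpNorm p v.1) :=
    ⟨c, Set.forall_mem_range.2 fun v => lpNorm_mulVec_div_le hp hc hA v.1⟩
  calc c = lpNorm p (A *ᵥ v) / lpNorm p v := by
        rw [hAv, lpNorm_smul hp, abs_of_nonneg hc,
          mul_div_cancel_right₀ _ (lpNorm_pos hp hv).ne']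
    _ ≤ opNorm p A := le_ciSup hbdd ⟨v, hv⟩

lemma exists_rpow_le_schurWeight [Fact (1 ≤ p)] (hp : p ≠ ⊤) [Nonempty (Fin n)]
    {A : Matrix (Fin m) (Fin n) ℝ} {c : ℝ} (hc : 0 ≤ c) (h : c ≤ opNorm p A) :
    ∃ j, c ^ p.toReal ≤ schurWeight A p.toReal j := by
  set q := p.toReal
  have hq : 0 < q := by linarith [one_le_toReal_of_fact hp]
  obtain ⟨j, hj⟩ := Finite.exists_max (schurWeight A q)
  refine ⟨j, le_of_not_gt fun hlt => ?_⟩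
  have hW := schurWeight_nonneg A q j
  have hle : opNorm p A ≤ schurWeight A q j ^ q⁻¹ :=
    opNorm_le_of_schurWeight_le hp (by positivity) fun k => by
      rw [Real.rpow_inv_rpow hW hq.ne']
      exact hj k
  have hlt' : schurWeight A q j ^ q⁻¹ < c := (Real.rpow_inv_lt_iff_of_pos hW hc hq).2 hlt
  linarith

end OperatorNorm

section Simplex

variable {n : ℕ} {s : Fin n → ℝ}

lemma le_one_of_mem_probSimplex (hs : s ∈ probSimplex n) (i : Fin n) : s i ≤ 1 :=
  hs.2 ▸ single_le_sum (fun j _ => hs.1 j) (mem_univ i)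

lemma nonempty_of_mem_probSimplex (hs : s ∈ probSimplex n) : Nonempty (Fin n) := by
  by_contra h
  have := hs.2
  simp_all

lemma eq_zero_of_mem_probSimplex_of_eq_half (hs : s ∈ probSimplex n) {i j k : Fin n}
    (hij : i ≠ j) (hi : s i = 1 / 2) (hj : s j = 1 / 2) (hki : k ≠ i) (hkj : k ≠ j) : s k = 0 := by
  have h := sum_le_univ_sum_of_nonneg (s := {i, j, k}) hs.1
  rw [sum_insert (by simp [hij, hki.symm]), sum_pair hkj.symm, hs.2, hi, hj] at h
  linarith [hs.1 k]

end Simplex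

section SoftmaxJacobian

variable {n : ℕ} {s : Fin n → ℝ}

lemma softmaxJac_apply (s : Fin n → ℝ) (i j : Fin n) :
    softmaxJac s i j = (if i = j then s i else 0) - s i * s j := by
  simp [softmaxJac, Matrix.diagonal_apply, Matrix.vecMulVec_apply]

lemma softmaxJac_apply_comm (s : Fin n → ℝ) (i j : Fin n) :
    softmaxJac s i j = softmaxJac s j i := by
  simp only [softmaxJac_apply, eq_comm (a := i), mul_comm (s i)]
  split_ifs with h <;> simp [h]

lemma softmaxJac_mulVec_eq_smul {v : Fin n → ℝ} {c : ℝ} (hsv : s ⬝ᵥ v = 0)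
    (hc : ∀ k, v k ≠ 0 → s k = c) : softmaxJac s *ᵥ v = c • v := by
  ext k
  rw [softmaxJac, Matrix.sub_mulVec, Matrix.vecMulVec_mulVec, hsv]
  by_cases hk : v k = 0
  · simp [Matrix.mulVec_diagonal, hk]
  · simp [Matrix.mulVec_diagonal, hc k hk]

lemma softmaxJac_mulVec_single_sub_single {i j : Fin n} (hi : s i = 1 / 2)
    (hj : s j = 1 / 2) :
    softmaxJac s *ᵥ (Pi.single i 1 - Pi.single j 1) =
      (1 / 2 : ℝ) • (Pi.single i 1 - Pi.single j 1) := by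
  refine softmaxJac_mulVec_eq_smul (by simp [dotProduct_sub, hi, hj]) fun k hk => ?_
  by_cases hki : k = i
  · rwa [hki]
  · by_cases hkj : k = j
    · rwa [hkj]
    · simp [hki, hkj] at hk

lemma abs_softmaxJac_apply (hs : s ∈ probSimplex n) (i j : Fin n) :
    |softmaxJac s i j| = if i = j then s i * (1 - s i) else s i * s j := by
  rw [softmaxJac_apply]
  split_ifs with h
  · subst h
    rw [abs_of_nonneg (by nlinarith [hs.1 i, le_one_of_mem_probSimplex hs i])]
    ring
  · rw [zero_sub, abs_neg, abs_of_nonneg (mul_nonneg (hs.1 i) (hs.1 j))]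

lemma sum_abs_softmaxJac (hs : s ∈ probSimplex n) (i : Fin n) :
    ∑ k, |softmaxJac s i k| = 2 * s i * (1 - s i) := by
  rw [← add_sum_erase _ _ (mem_univ i),
    sum_congr rfl fun k hk => by rw [abs_softmaxJac_apply hs, if_neg (ne_of_mem_erase hk).symm],
    ← mul_sum, sum_erase_eq_sub (mem_univ i), hs.2, abs_softmaxJac_apply hs, if_pos rfl]
  ring

lemma sum_abs_softmaxJac_le_half (hs : s ∈ probSimplex n) (i : Fin n) :
    ∑ k, |softmaxJac s i k| ≤ 1 / 2 := by
  rw [sum_abs_softmaxJac hs]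
  nlinarith [sq_nonneg (2 * s i - 1)]

lemma sum_abs_softmaxJac_lt_half (hs : s ∈ probSimplex n) {i : Fin n} (hi : s i ≠ 1 / 2) :
    ∑ k, |softmaxJac s i k| < 1 / 2 := by
  have : 2 * s i - 1 ≠ 0 := fun h => hi (by linarith)
  rw [sum_abs_softmaxJac hs]
  nlinarith [sq_pos_of_ne_zero this]

lemma sum_abs_softmaxJac_col (s : Fin n → ℝ) (j : Fin n) :
    ∑ i, |softmaxJac s i j| = ∑ k, |softmaxJac s j k| := by
  simp only [softmaxJac_apply_comm s _ j]

lemma schurWeight_softmaxJac_le (hs : s ∈ probSimplex n) {q : ℝ} (hq : 1 ≤ q) (j : Fin n) :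
    schurWeight (softmaxJac s) q j ≤ (1 / 2) ^ q :=
  calc schurWeight (softmaxJac s) q j
      ≤ (1 / 2) ^ (q - 1) * ∑ i, |softmaxJac s i j| :=
        schurWeight_le (sum_abs_softmaxJac_le_half hs) hq j
    _ ≤ (1 / 2) ^ (q - 1) * (1 / 2) := by
        rw [sum_abs_softmaxJac_col]
        gcongr
        exact sum_abs_softmaxJac_le_half hs j
    _ = (1 / 2) ^ q := rpow_sub_one_mul_self (by norm_num) q

lemma eq_half_of_half_rpow_le_schurWeight_softmaxJac (hs : s ∈ probSimplex n) {q : ℝ}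
    (hq : 1 < q) {j : Fin n} (hj : (1 / 2) ^ q ≤ schurWeight (softmaxJac s) q j) :
    s j = 1 / 2 ∧ ∃ i ≠ j, s i = 1 / 2 := by
  have hR := sum_abs_softmaxJac_le_half hs
  have hsj : s j = 1 / 2 := by
    by_contra hne
    have := (schurWeight_le hR hq.le j).trans_lt <| mul_lt_mul_of_pos_left
      (sum_abs_softmaxJac_col s j ▸ sum_abs_softmaxJac_lt_half hs hne)
      (by positivity : (0 : ℝ) < (1 / 2) ^ (q - 1))
    linarith [rpow_sub_one_mul_self (by norm_num : (1 / 2 : ℝ) ≠ 0) q]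
  refine ⟨hsj, ?_⟩
  have hrest : 0 < ∑ i ∈ univ.erase j, s i := by
    rw [sum_erase_eq_sub (mem_univ j), hs.2, hsj]
    norm_num
  obtain ⟨i, hi, hsi⟩ := (sum_pos_iff_of_nonneg fun i _ => hs.1 i).1 hrest
  have hij := ne_of_mem_erase hi
  refine ⟨i, hij, ?_⟩
  by_contra hne
  have hJ : softmaxJac s i j ≠ 0 := by
    rw [softmaxJac_apply, if_neg hij, zero_sub, neg_ne_zero, hsj]
    positivity
  have := schurWeight_lt hR hq hJ (sum_abs_softmaxJac_lt_half hs hne)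
  rw [sum_abs_softmaxJac_col, sum_abs_softmaxJac hs, hsj] at this
  linarith [rpow_sub_one_mul_self (by norm_num : (1 / 2 : ℝ) ≠ 0) q]

end SoftmaxJacobian

theorem opNorm_eq_half_iff_support_two_general {n : ℕ}
    (p : ℝ≥0∞) (hp1 : 1 < p) (hp2 : p ≠ ⊤)
    (s : Fin n → ℝ) (hs : s ∈ probSimplex n) :
    opNorm p (softmaxJac s) = 1 / 2 ↔
      ∃ i j : Fin n, i ≠ j ∧ s i = 1 / 2 ∧ s j = 1 / 2 ∧
        ∀ k : Fin n, k ≠ i → k ≠ j → s k = 0 := by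
  have : Fact (1 ≤ p) := ⟨hp1.le⟩
  have hq : 1 < p.toReal := by
    simpa using (ENNReal.toReal_lt_toReal ENNReal.one_ne_top hp2).2 hp1
  constructor
  · intro hnorm
    have := nonempty_of_mem_probSimplex hs
    obtain ⟨j, hj⟩ := exists_rpow_le_schurWeight hp2 (by norm_num) hnorm.ge
    obtain ⟨hsj, i, hij, hsi⟩ := eq_half_of_half_rpow_le_schurWeight_softmaxJac hs hq hj
    exact ⟨i, j, hij, hsi, hsj, fun k =>
      eq_zero_of_mem_probSimplex_of_eq_half hs hij hsi hsj⟩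
  · rintro ⟨i, j, hij, hsi, hsj, -⟩
    refine opNorm_eq_of_mulVec_eq_smul hp2 (by norm_num)
      (schurWeight_softmaxJac_le hs hq.le) ?_ (softmaxJac_mulVec_single_sub_single hsi hsj)
    intro h
    simpa [hij] using congrFun h i

/-- for n > 2 and 1 < p < ∞ and s in the closed simplex,
`‖Diag(s) - s sᵀ‖_p = 1/2` iff s is a permutation of (1/2, 1/2, 0, …, 0). -/
theorem opNorm_eq_half_iff_support_two {n : ℕ} (hn : 2 < n)
    (p : ℝ≥0∞) (hp1 : 1 < p) (hp2 : p ≠ ⊤)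
    (s : Fin n → ℝ) (hs : s ∈ probSimplex n) :
    opNorm p (softmaxJac s) = 1 / 2 ↔
      ∃ i j : Fin n, i ≠ j ∧ s i = 1 / 2 ∧ s j = 1 / 2 ∧
        ∀ k : Fin n, k ≠ i → k ≠ j → s k = 0 :=
  opNorm_eq_half_iff_support_two_general p hp1 hp2 s hs
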